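/- arXiv:2303.14002 — 3 statements merged into one kernel-verified Lean document; each statement's English description precedes it below -/
import Mathlib

section
/- For a finite group G and the canonical frame given by the PVM P(g) = |g⟩⟨g| on l²(G) with left regular representation, the relativization yen(A) = Σ_{g∈G} |g⟩⟨g| ⊗ U_S(g) A U_S(g)* of any bounded operator A on H_S is invariant under the diagonal action of G: (U_L(h) ⊗ U_S(h)) yen(A) (U_L(h) ⊗ U_S(h))* = yen(A) for all h ∈ G. -/
open scoped Kronecker
open Matrix

/-- The relativization map for a finite group `G` with the canonical ideal frame
`P(g) = |g⟩⟨g|` on `l²(G)`:  `yen(A) = Σ_g |g⟩⟨g| ⊗ U_S(g) A U_S(g)*`. -/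
noncomputable def yen {G : Type*} [Group G] [Fintype G] [DecidableEq G]
    {n : Type*} [Fintype n] [DecidableEq n]
    (US : G →* Matrix.unitaryGroup n ℂ) (A : Matrix n n ℂ) :
    Matrix (G × n) (G × n) ℂ :=
  ∑ g : G, (Matrix.single g g (1 : ℂ)) ⊗ₖ
    ((US g : Matrix n n ℂ) * A * star (US g : Matrix n n ℂ))

/-- The left regular representation `U_L(h)|g⟩ = |hg⟩` of a finite group `G`,
as a permutation matrix on `l²(G)`. -/
noncomputable def UL {G : Type*} [Group G] [Fintype G] [DecidableEq G] (h : G) :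
    Matrix G G ℂ :=
  Matrix.of fun g g' => if g = h * g' then 1 else 0

/-! Conjugation by `U_L(h) ⊗ U_S(h)` sends the `g`-th summand of `yen(A)` to the `hg`-th one,
so it only permutes the terms of the sum. -/

open Finset

lemma kronecker_conj_kronecker {R m p : Type*} [CommSemiring R] [StarRing R]
    [Fintype m] [Fintype p] (A C : Matrix m m R) (B D : Matrix p p R) :
    (A ⊗ₖ B) * (C ⊗ₖ D) * star (A ⊗ₖ B) = (A * C * star A) ⊗ₖ (B * D * star B) := by
  rw [star_eq_conjTranspose, conjTranspose_kronecker, ← mul_kronecker_mul,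
    ← mul_kronecker_mul]
  rfl

lemma map_mul_conj {G M : Type*} [Monoid G] [Monoid M] [StarMul M]
    (U : G →* M) (g h : G) (x : M) :
    U h * (U g * x * star (U g)) * star (U h) = U (h * g) * x * star (U (h * g)) := by
  simp only [map_mul, star_mul, mul_assoc]

section LeftRegular

variable {G : Type*} [Group G] [Fintype G] [DecidableEq G]

lemma star_UL (h : G) : star (UL h) = UL h⁻¹ := by
  ext a b
  simp [UL, star_apply, apply_ite (star : ℂ → ℂ), eq_inv_mul_iff_mul_eq, eq_comm]

lemma UL_mul_single (h g g' : G) (c : ℂ) :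
    UL h * single g g' c = single (h * g) g' c := by
  ext a b
  simp [UL, mul_apply, single_apply, ite_and, eq_comm]
  split_ifs <;> rfl

lemma single_mul_UL (h g g' : G) (c : ℂ) :
    single g g' c * UL h = single g (h⁻¹ * g') c := by
  ext a b
  simp [UL, mul_apply, single_apply, ite_and, eq_comm, eq_inv_mul_iff_mul_eq]

lemma UL_conj_single (h g : G) (c : ℂ) :
    UL h * single g g c * star (UL h) = single (h * g) (h * g) c := by
  rw [UL_mul_single, star_UL, single_mul_UL, inv_inv]

end LeftRegular

/-- the relativization `yen(A)` of any bounded operator `A` on `H_S` is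
invariant under the diagonal action of `G`:
`(U_L(h) ⊗ U_S(h)) yen(A) (U_L(h) ⊗ U_S(h))* = yen(A)` for all `h ∈ G`. -/
theorem yen_invariant {G : Type*} [Group G] [Fintype G] [DecidableEq G]
    {n : Type*} [Fintype n] [DecidableEq n]
    (US : G →* Matrix.unitaryGroup n ℂ) (h : G) (A : Matrix n n ℂ) :
    ((UL h) ⊗ₖ (US h : Matrix n n ℂ)) * yen US A *
        star ((UL h) ⊗ₖ (US h : Matrix n n ℂ)) = yen US A := by
  let U : G →* Matrix n n ℂ := (unitaryGroup n ℂ).subtype.comp US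
  change (UL h ⊗ₖ U h) * (∑ g, single g g 1 ⊗ₖ (U g * A * star (U g))) *
      star (UL h ⊗ₖ U h) = ∑ g, single g g 1 ⊗ₖ (U g * A * star (U g))
  simp only [mul_sum, sum_mul, kronecker_conj_kronecker, UL_conj_single, map_mul_conj]
  exact Fintype.sum_equiv (Equiv.mulLeft h) _ _ fun _ => rfl
end

section
/- If the frame state ω is invariant (U_R(g)ωU_R(g)* = ω for all g) and E is a covariant POVM on G, then the Born measure μ^E_ω is the (normalized) Haar measure, and consequently ρ^{(ω)} equals the twirl G_*(ρ) = ∫_G U_S(g)*ρU_S(g) dμ(g) for every system state ρ. -/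
open scoped ComplexOrder
open Matrix

/-- if the frame state `ω` is invariant (`U_R(g) ω U_R(g)* = ω` for all
`g`) and `E` is a covariant POVM on `G`, then the Born measure `μ^E_ω` is the normalized
Haar measure (for finite `G`: `μ^E_ω({g}) = 1/|G|` for all `g`), and consequently
`ρ^{(ω)} = Σ_g tr[ω E(g)] U_S(g)* ρ U_S(g)` equals the twirl
`𝒢_*(ρ) = (1/|G|) Σ_g U_S(g)* ρ U_S(g)` for every system state `ρ`. -/
theorem invariant_frame_state_gives_twirl {G : Type*} [Group G] [Fintype G] [DecidableEq G]
    {k : Type*} [Fintype k] [DecidableEq k]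
    {n : Type*} [Fintype n] [DecidableEq n]
    (UR : G →* Matrix.unitaryGroup k ℂ) (US : G →* Matrix.unitaryGroup n ℂ)
    (E : G → Matrix k k ℂ)
    (hpos : ∀ g, (E g).PosSemidef) (hnorm : ∑ g : G, E g = 1)
    (hcov : ∀ g x : G,
      E (g * x) = (UR g : Matrix k k ℂ) * E x * star (UR g : Matrix k k ℂ))
    (ω : Matrix k k ℂ) (hω : ω.PosSemidef) (hωtr : ω.trace = 1)
    (hinv : ∀ g : G, (UR g : Matrix k k ℂ) * ω * star (UR g : Matrix k k ℂ) = ω) :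
    (∀ g : G, (ω * E g).trace = (1 : ℂ) / (Fintype.card G : ℂ)) ∧
    (∀ ρ : Matrix n n ℂ, ρ.PosSemidef → ρ.trace = 1 →
      ∑ g : G, (ω * E g).trace •
          (star (US g : Matrix n n ℂ) * ρ * (US g : Matrix n n ℂ)) =
        ((1 : ℂ) / (Fintype.card G : ℂ)) •
          ∑ g : G, star (US g : Matrix n n ℂ) * ρ * (US g : Matrix n n ℂ)) := by
  have hconst : ∀ g : G, (ω * E g).trace = (ω * E 1).trace := by
    intro g
    have hU : star (UR g : Matrix k k ℂ) * (UR g : Matrix k k ℂ) = 1 :=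
      (UR g).prop.1
    have hU' : (UR g : Matrix k k ℂ) * star (UR g : Matrix k k ℂ) = 1 :=
      (UR g).prop.2
    have hωg : star (UR g : Matrix k k ℂ) * ω * (UR g : Matrix k k ℂ) = ω := by
      conv_lhs => rw [← hinv g]
      simp only [Matrix.mul_assoc, hU']
      rw [hU, Matrix.mul_one, ← Matrix.mul_assoc, hU, Matrix.one_mul]
    have hg : E g = (UR g : Matrix k k ℂ) * E 1 * star (UR g : Matrix k k ℂ) := by
      simpa using hcov g 1
    rw [hg, ← Matrix.mul_assoc, Matrix.trace_mul_comm, ← Matrix.mul_assoc,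
      ← Matrix.mul_assoc, hωg]
  have hcard : (Fintype.card G : ℂ) ≠ 0 := by
    exact_mod_cast Nat.cast_ne_zero.mpr Fintype.card_ne_zero
  have hsum : (Fintype.card G : ℂ) * (ω * E 1).trace = 1 := by
    have : ∑ g : G, (ω * E g).trace = 1 := by
      rw [← Matrix.trace_sum, ← Finset.mul_sum, hnorm, Matrix.mul_one, hωtr]
    calc (Fintype.card G : ℂ) * (ω * E 1).trace
        = ∑ _g : G, (ω * E 1).trace := by
          rw [Finset.sum_const, Finset.card_univ, nsmul_eq_mul]
      _ = ∑ g : G, (ω * E g).trace := by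
          exact Finset.sum_congr rfl fun g _ => (hconst g).symm
      _ = 1 := this
  have key : ∀ g : G, (ω * E g).trace = (1 : ℂ) / (Fintype.card G : ℂ) := by
    intro g
    rw [hconst g]
    field_simp
    linear_combination hsum
  refine ⟨key, fun ρ _ _ => ?_⟩
  rw [Finset.smul_sum]
  exact Finset.sum_congr rfl fun g _ => by rw [key g]
end

section
/- For a finite group G with ideal frames R_1, R_2 (canonical PVM frames on l²(G)), the unitary frame change U_{1→2} of de la Hamette–Galley type and the operational localized frame change produce operationally equivalent outputs: for every state Ω on l²(G) ⊗ H_S and every effect of the form |l^{-1}⟩⟨l^{-1}| ⊗ F_S, tr[U_{1→2} Ω U_{1→2}* (|l^{-1}⟩⟨l^{-1}| ⊗ F_S)] = tr[Ω (|l⟩⟨l| ⊗ U_S(l)*F_S U_S(l))]. -/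
/-! Both sides are linear in `Ω`, and kronecker products `ω ⊗ ρ` span all matrices on
`l²(G) ⊗ H_S`, so it suffices to take `Ω = ω ⊗ ρ`. There the projector `|l⁻¹⟩⟨l⁻¹|` selects
the single term `g = h = l` of the frame-changed state, leaving `ω(l,l) tr[U_S(l) ρ U_S(l)* F]`,
which is the right-hand side by cyclicity of the trace. -/

open scoped ComplexOrder Kronecker
open Matrix

namespace Matrix

theorem linearMap_ext_kronecker {R β l m n p : Type*} [CommSemiring R] [AddCommMonoid β]
    [Module R β] [Finite l] [Finite m] [Finite n] [Finite p]
    [DecidableEq l] [DecidableEq m] [DecidableEq n] [DecidableEq p]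
    {f g : Matrix (l × n) (m × p) R →ₗ[R] β}
    (h : ∀ (A : Matrix l m R) (B : Matrix n p R), f (A ⊗ₖ B) = g (A ⊗ₖ B)) : f = g := by
  refine ext_linearMap R fun i j => LinearMap.ext_ring ?_
  simpa [single_kronecker_single] using h (single i.1 j.1 1) (single i.2 j.2 1)

theorem trace_kronecker_mul_single_kronecker {R l n : Type*} [CommSemiring R]
    [Fintype l] [Fintype n] [DecidableEq l]
    (A : Matrix l l R) (X Y : Matrix n n R) (c : l) :
    (A ⊗ₖ X * (single c c 1 ⊗ₖ Y)).trace = A c c * (X * Y).trace := by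
  rw [← mul_kronecker_mul, trace_kronecker, trace_mul_single]
  simp

end Matrix

/-- The output `U₁₂ (ω ⊗ ρ) U₁₂*` of the coherent frame change on a product input, with
`V g` in the role of `U_S(g)`. -/
def coherentFrameChange {G R n : Type*} [InvolutiveInv G] [Fintype G] [DecidableEq G]
    [CommSemiring R] [Star R] [Fintype n] (V : G → Matrix n n R) (ω : Matrix G G R)
    (ρ : Matrix n n R) : Matrix (G × n) (G × n) R :=
  ∑ g : G, ∑ h : G, ω g h • (single g⁻¹ h⁻¹ 1 ⊗ₖ (V g * ρ * star (V h)))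

theorem trace_coherentFrameChange_mul {G R n : Type*} [InvolutiveInv G] [Fintype G]
    [DecidableEq G] [CommSemiring R] [Star R] [Fintype n] (V : G → Matrix n n R) (ω : Matrix G G R)
    (ρ F : Matrix n n R) (l : G) :
    (coherentFrameChange V ω ρ * (single l⁻¹ l⁻¹ 1 ⊗ₖ F)).trace =
      ω l l * (V l * ρ * star (V l) * F).trace := by
  simp [coherentFrameChange, Finset.sum_mul, trace_sum, smul_mul_assoc,
    trace_kronecker_mul_single_kronecker, single_apply, ite_and]

theorem frame_change_operational_equivalence_general
    {G : Type*} [Group G] [Fintype G] [DecidableEq G]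
    {n : Type*} [Fintype n] [DecidableEq n]
    (US : G →* Matrix.unitaryGroup n ℂ)
    (U12 : Matrix (G × n) (G × n) ℂ)
    (hchar : ∀ (ω : Matrix G G ℂ) (ρ : Matrix n n ℂ),
      U12 * (ω ⊗ₖ ρ) * star U12 =
        ∑ g : G, ∑ h : G, (ω g h) •
          ((Matrix.single g⁻¹ h⁻¹ (1 : ℂ)) ⊗ₖ
            ((US g : Matrix n n ℂ) * ρ * star (US h : Matrix n n ℂ))))
    (Ω : Matrix (G × n) (G × n) ℂ)
    (F : Matrix n n ℂ)
    (l : G) :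
    (U12 * Ω * star U12 * ((Matrix.single l⁻¹ l⁻¹ (1 : ℂ)) ⊗ₖ F)).trace =
      (Ω * ((Matrix.single l l (1 : ℂ)) ⊗ₖ
        (star (US l : Matrix n n ℂ) * F * (US l : Matrix n n ℂ)))).trace := by
  set V : G → Matrix n n ℂ := fun g => US g
  let frameChanged : Matrix (G × n) (G × n) ℂ →ₗ[ℂ] ℂ :=
    traceLinearMap _ ℂ ℂ ∘ₗ LinearMap.mulRight ℂ (star U12 * (single l⁻¹ l⁻¹ 1 ⊗ₖ F)) ∘ₗ
      LinearMap.mulLeft ℂ U12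
  let localized : Matrix (G × n) (G × n) ℂ →ₗ[ℂ] ℂ :=
    traceLinearMap _ ℂ ℂ ∘ₗ LinearMap.mulRight ℂ (single l l 1 ⊗ₖ (star (V l) * F * V l))
  have hproduct : frameChanged = localized := linearMap_ext_kronecker fun ω ρ => by
    have hω : U12 * (ω ⊗ₖ ρ) * star U12 = coherentFrameChange V ω ρ := hchar ω ρ
    change (U12 * (ω ⊗ₖ ρ) * (star U12 * (single l⁻¹ l⁻¹ 1 ⊗ₖ F))).trace =
      ((ω ⊗ₖ ρ) * (single l l 1 ⊗ₖ (star (V l) * F * V l))).trace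
    rw [← mul_assoc, hω, trace_coherentFrameChange_mul, trace_kronecker_mul_single_kronecker,
      mul_assoc, mul_assoc, trace_mul_comm]
    simp only [mul_assoc]
  simpa [frameChanged, localized, mul_assoc] using LinearMap.congr_fun hproduct Ω

/-- for a finite group `G` with ideal frames (canonical PVM frames on
`l²(G)`, representation `U(g)|h⟩ = |hg⁻¹⟩`, frame PVM `P(g) = |g⁻¹⟩⟨g⁻¹|`), the unitary
frame change `U_{1→2}` of de la Hamette–Galley type — characterized on product states by
`U_{1→2}(ω ⊗ ρ)U_{1→2}* = Σ_{g,h} ⟨g|ω|h⟩ |g⁻¹⟩⟨h⁻¹| ⊗ U_S(g) ρ U_S(h)*` — and the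
operational localized frame change produce operationally equivalent outputs: for every
state `Ω` on `l²(G) ⊗ H_S`, every effect `F_S` and every `l ∈ G`,
`tr[U_{1→2} Ω U_{1→2}* (|l⁻¹⟩⟨l⁻¹| ⊗ F_S)] = tr[Ω (|l⟩⟨l| ⊗ U_S(l)* F_S U_S(l))]`. -/
theorem frame_change_operational_equivalence
    {G : Type*} [Group G] [Fintype G] [DecidableEq G]
    {n : Type*} [Fintype n] [DecidableEq n]
    (US : G →* Matrix.unitaryGroup n ℂ)
    (U12 : Matrix (G × n) (G × n) ℂ)
    (hU12a : U12 * star U12 = 1) (hU12b : star U12 * U12 = 1)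
    (hchar : ∀ (ω : Matrix G G ℂ) (ρ : Matrix n n ℂ),
      U12 * (ω ⊗ₖ ρ) * star U12 =
        ∑ g : G, ∑ h : G, (ω g h) •
          ((Matrix.single g⁻¹ h⁻¹ (1 : ℂ)) ⊗ₖ
            ((US g : Matrix n n ℂ) * ρ * star (US h : Matrix n n ℂ))))
    (Ω : Matrix (G × n) (G × n) ℂ) (hΩ : Ω.PosSemidef) (hΩtr : Ω.trace = 1)
    (F : Matrix n n ℂ) (hF : F.PosSemidef) (hF1 : ((1 : Matrix n n ℂ) - F).PosSemidef)
    (l : G) :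
    (U12 * Ω * star U12 * ((Matrix.single l⁻¹ l⁻¹ (1 : ℂ)) ⊗ₖ F)).trace =
      (Ω * ((Matrix.single l l (1 : ℂ)) ⊗ₖ
        (star (US l : Matrix n n ℂ) * F * (US l : Matrix n n ℂ)))).trace :=
  frame_change_operational_equivalence_general US U12 hchar Ω F l
end
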